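/- Let (G,P) be a quasi-lattice ordered group and let S ⊆ P∖{e} be a generating set of P (every element of P∖{e} is a finite product of elements of S) with the property that for every p ∈ P and s ∈ S, either p ∨ s = p, or p ∨ s = ps, or p and s have no common upper bound. Then every Ω ∈ B_P can be written as a finite disjoint union of sets, each of which is either of the form pP for some p ∈ P, or of the form p·⋂_{s∈J}(P ∖ sP) for some p ∈ P and some finite nonempty subset J ⊆ S. -/

import Mathlib

/-- The order on `G` induced by the submonoid `P`: `g ≤ h` iff `g⁻¹ * h ∈ P`. -/
def QLe {G : Type*} [Group G] (P : Submonoid G) (g h : G) : Prop := g⁻¹ * h ∈ P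

/-- `u` is the least upper bound of `g` and `h` with respect to `QLe P`. -/
def QLub {G : Type*} [Group G] (P : Submonoid G) (g h u : G) : Prop :=
  QLe P g u ∧ QLe P h u ∧ ∀ v, QLe P g v → QLe P h v → QLe P u v

/-- `(G, P)` is a quasi-lattice ordered group. -/
structure QuasiLatticeOrdered {G : Type*} [Group G] (P : Submonoid G) : Prop where
  gen : Subgroup.closure (P : Set G) = ⊤
  cap : ∀ g ∈ P, g⁻¹ ∈ P → g = 1
  lub : ∀ g h : G, (∃ u, QLe P g u ∧ QLe P h u) → ∃ u, QLub P g h u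

/-- Membership in the algebra `B_P` of subsets of `P` generated by the sets
`pP = {x | p⁻¹ x ∈ P}`, `p ∈ P`: the smallest collection of subsets containing the sets
`pP` and closed under complements in `P`, finite unions and finite intersections. -/
inductive MemBP {G : Type*} [Group G] (P : Submonoid G) : Set G → Prop
  | basic (p : G) (hp : p ∈ P) : MemBP P {x | QLe P p x}
  | compl (Ω : Set G) : MemBP P Ω → MemBP P ((P : Set G) \ Ω)
  | union (Ω₁ Ω₂ : Set G) : MemBP P Ω₁ → MemBP P Ω₂ → MemBP P (Ω₁ ∪ Ω₂)
  | inter (Ω₁ Ω₂ : Set G) : MemBP P Ω₁ → MemBP P Ω₂ → MemBP P (Ω₁ ∩ Ω₂)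

/-- For a finite set `J ⊆ P \ {e}`, `Ω_J = ⋂_{q ∈ J} (P \ qP)`
(with the convention `Ω_∅ = P`). -/
def OmegaJ {G : Type*} [Group G] (P : Submonoid G) (J : Finset G) : Set G :=
  (P : Set G) ∩ ⋂ q ∈ J, {x | QLe P q x}ᶜ

/-!
Call `p · Ω_J`, with `p ∈ P` and `J ⊆ S` finite, a translate; it equals
`pP ∖ ⋃_{s ∈ J} psP`.
It suffices to show that finite disjoint unions of translates are closed under intersection and
under complement in `P`. Both reduce to removing one cone `cP` from a translate `p · Ω_J`: if
`u = p ∨ c` exists this gives `p · (Ω_J ∖ p⁻¹u P)`, otherwise nothing is removed. Finally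
`Ω_J ∖ aP` is handled by induction on a word `a = s b` over `S`:
`Ω_J ∖ sbP = Ω_{J ∪ {s}} ⊔ ((Ω_J ∩ sP) ∖ sbP)`, and the hypothesis on `S` gives
`Ω_J ∩ sP = s · Ω_{J'}` (or `∅`) with `J' = {q ∈ J | s ∨ q = sq}`, so the second piece is
`s · (Ω_{J'} ∖ bP)`.
-/

namespace Set

variable {α : Type*} (C : Set (Set α))

def IsFiniteDisjointUnion (Ω : Set α) : Prop :=
  ∃ 𝒯 ⊆ C, 𝒯.Finite ∧ 𝒯.PairwiseDisjoint id ∧ ⋃₀ 𝒯 = Ω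

namespace IsFiniteDisjointUnion

variable {C}

theorem of_mem {T : Set α} (hT : T ∈ C) : IsFiniteDisjointUnion C T :=
  ⟨{T}, singleton_subset_iff.2 hT, finite_singleton T, pairwiseDisjoint_singleton _ _,
    sUnion_singleton T⟩

theorem empty : IsFiniteDisjointUnion C ∅ :=
  ⟨∅, empty_subset C, finite_empty, pairwiseDisjoint_empty, sUnion_empty⟩

theorem biUnion {ι : Type*} {s : Set ι} (hs : s.Finite) {f : ι → Set α}
    (hd : s.PairwiseDisjoint f) (h : ∀ i ∈ s, IsFiniteDisjointUnion C (f i)) :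
    IsFiniteDisjointUnion C (⋃ i ∈ s, f i) := by
  choose! 𝒯 h𝒯C h𝒯fin h𝒯d h𝒯 using h
  refine ⟨⋃ i ∈ s, 𝒯 i, iUnion₂_subset h𝒯C, hs.biUnion h𝒯fin, ?_, ?_⟩
  · refine PairwiseDisjoint.biUnion (hd.mono_on fun i hi => ?_) h𝒯d
    exact iSup₂_le fun T hT => h𝒯 i hi ▸ subset_sUnion_of_mem hT
  · simp only [sUnion_iUnion]
    exact iUnion₂_congr h𝒯

theorem union {A B : Set α} (hA : IsFiniteDisjointUnion C A) (hB : IsFiniteDisjointUnion C B)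
    (hAB : Disjoint A B) : IsFiniteDisjointUnion C (A ∪ B) := by
  obtain ⟨𝒯, h𝒯C, h𝒯fin, h𝒯d, rfl⟩ := hA
  obtain ⟨𝒰, h𝒰C, h𝒰fin, h𝒰d, rfl⟩ := hB
  refine ⟨𝒯 ∪ 𝒰, union_subset h𝒯C h𝒰C, h𝒯fin.union h𝒰fin,
    h𝒯d.union h𝒰d ?_, sUnion_union 𝒯 𝒰⟩
  exact fun T hT U hU _ => hAB.mono (subset_sUnion_of_mem hT) (subset_sUnion_of_mem hU)

theorem image {f : α → α} (hf : f.Injective) (hC : ∀ T ∈ C, f '' T ∈ C) {A : Set α}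
    (hA : IsFiniteDisjointUnion C A) : IsFiniteDisjointUnion C (f '' A) := by
  obtain ⟨𝒯, h𝒯C, h𝒯fin, h𝒯d, rfl⟩ := hA
  rw [sUnion_eq_biUnion, image_iUnion₂]
  refine biUnion h𝒯fin ?_ fun T hT => of_mem (hC T (h𝒯C hT))
  exact fun T hT U hU hTU => (disjoint_image_iff hf).2 (h𝒯d hT hU hTU)

theorem inter_of_forall_mem {A X : Set α} (hA : IsFiniteDisjointUnion C A)
    (hX : ∀ T ∈ C, IsFiniteDisjointUnion C (T ∩ X)) : IsFiniteDisjointUnion C (A ∩ X) := by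
  obtain ⟨𝒯, h𝒯C, h𝒯fin, h𝒯d, rfl⟩ := hA
  rw [sUnion_eq_biUnion, iUnion₂_inter]
  exact biUnion h𝒯fin (h𝒯d.mono fun T => inter_subset_left) fun T hT => hX T (h𝒯C hT)

theorem exists_fin {Ω : Set α} (h : IsFiniteDisjointUnion C Ω) :
    ∃ (n : ℕ) (T : Fin n → Set α), (∀ i, T i ∈ C) ∧
      (∀ i j, i ≠ j → Disjoint (T i) (T j)) ∧ Ω = ⋃ i, T i := by
  obtain ⟨𝒯, h𝒯C, h𝒯fin, h𝒯d, rfl⟩ := h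
  have := h𝒯fin.to_subtype
  obtain ⟨n, ⟨e⟩⟩ := Finite.exists_equiv_fin 𝒯
  refine ⟨n, fun i => e.symm i, fun i => h𝒯C (e.symm i).2, fun i j hij => ?_, ?_⟩
  · exact h𝒯d (e.symm i).2 (e.symm j).2 fun h => hij (e.symm.injective (Subtype.ext h))
  · rw [sUnion_eq_iUnion]
    exact (e.symm.iSup_comp (g := fun T : 𝒯 => (T : Set α))).symm

variable (hC : ∀ T ∈ C, ∀ U ∈ C, IsFiniteDisjointUnion C (T ∩ U))
include hC

theorem inter {A B : Set α} (hA : IsFiniteDisjointUnion C A) (hB : IsFiniteDisjointUnion C B) :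
    IsFiniteDisjointUnion C (A ∩ B) :=
  hA.inter_of_forall_mem fun T hT => by
    simpa only [inter_comm] using hB.inter_of_forall_mem fun U hU => hC U hU T hT

theorem sdiff {U A : Set α} (hU : IsFiniteDisjointUnion C U) (hA : IsFiniteDisjointUnion C A)
    (hUC : ∀ T ∈ C, IsFiniteDisjointUnion C (U \ T)) : IsFiniteDisjointUnion C (U \ A) := by
  obtain ⟨𝒯, h𝒯C, h𝒯fin, -, rfl⟩ := hA
  induction 𝒯, h𝒯fin using Set.Finite.induction_on with
  | empty => simpa using hU
  | @insert T 𝒯 _ _ ih =>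
    rw [insert_subset_iff] at h𝒯C
    rw [sUnion_insert, ← sdiff_inter_sdiff]
    exact inter hC (hUC T h𝒯C.1) (ih h𝒯C.2)

end IsFiniteDisjointUnion

end Set

section

open Set

variable {G : Type*} [Group G] {P : Submonoid G}

namespace QLe

theorem trans {a b c : G} (hab : QLe P a b) (hbc : QLe P b c) : QLe P a c := by
  simpa [QLe, mul_assoc] using P.mul_mem hab hbc

theorem mem_of_mem {a b : G} (ha : a ∈ P) (hab : QLe P a b) : b ∈ P := by
  simpa using P.mul_mem ha hab

theorem mul_right {a b : G} (hb : b ∈ P) : QLe P a (a * b) := by simpa [QLe] using hb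

theorem mul_left_iff {p a x : G} : QLe P (p * a) x ↔ QLe P a (p⁻¹ * x) := by
  simp [QLe, mul_assoc]

end QLe

def cone (P : Submonoid G) (p : G) : Set G := {x | QLe P p x}

theorem mem_cone {p x : G} : x ∈ cone P p ↔ QLe P p x := Iff.rfl

theorem cone_one : cone P 1 = P := by ext x; simp [cone, QLe]

theorem cone_subset {p : G} (hp : p ∈ P) : cone P p ⊆ P := fun _ => QLe.mem_of_mem hp

theorem cone_antitone {p q : G} (h : QLe P p q) : cone P q ⊆ cone P p := fun _ => h.trans

theorem image_mul_cone (p a : G) : (p * ·) '' cone P a = cone P (p * a) := by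
  ext x; simp [image_mul_left, mem_cone, QLe.mul_left_iff]

theorem cone_inter_cone_of_qLub {p q u : G} (h : QLub P p q u) :
    cone P p ∩ cone P q = cone P u :=
  Subset.antisymm (fun x hx => h.2.2 x hx.1 hx.2)
    (subset_inter (cone_antitone h.1) (cone_antitone h.2.1))

theorem cone_inter_cone_of_not_bdd {p q : G} (h : ¬ ∃ u, QLe P p u ∧ QLe P q u) :
    cone P p ∩ cone P q = ∅ :=
  eq_empty_of_forall_notMem fun x hx => h ⟨x, hx⟩

theorem mem_omegaJ {J : Finset G} {x : G} :
    x ∈ OmegaJ P J ↔ x ∈ P ∧ ∀ q ∈ J, ¬ QLe P q x := by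
  simp [OmegaJ]

theorem omegaJ_subset (J : Finset G) : OmegaJ P J ⊆ P := inter_subset_left

theorem omegaJ_eq_sdiff (J : Finset G) : OmegaJ P J = cone P 1 \ ⋃ q ∈ J, cone P q := by
  ext x; simp [mem_omegaJ, cone_one, mem_cone]

theorem omegaJ_insert [DecidableEq G] (s : G) (J : Finset G) :
    OmegaJ P (insert s J) = OmegaJ P J \ cone P s := by
  ext x
  simp only [mem_omegaJ, mem_sdiff, mem_cone, Finset.mem_insert, forall_eq_or_imp]
  tauto

theorem image_mul_omegaJ (p : G) (J : Finset G) :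
    (p * ·) '' OmegaJ P J = cone P p \ ⋃ q ∈ J, cone P (p * q) := by
  simp only [omegaJ_eq_sdiff, image_sdiff (mul_right_injective p), image_iUnion₂, image_mul_cone,
    mul_one]

-- `J = ∅` gives the cones `pP`, since `Ω_∅ = P`.
variable (P) in
def omegaTranslates (S : Set G) : Set (Set G) :=
  {T | ∃ p ∈ P, ∃ J : Finset G, ↑J ⊆ S ∧ T = (p * ·) '' OmegaJ P J}

variable (P) in
def GeneratorJoinCondition (S : Set G) : Prop :=
  ∀ p ∈ P, ∀ s ∈ S, (∃ u, QLe P p u ∧ QLe P s u) → QLub P p s p ∨ QLub P p s (p * s)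

variable {S : Set G}

theorem omegaJ_mem_omegaTranslates {J : Finset G} (hJ : ↑J ⊆ S) :
    OmegaJ P J ∈ omegaTranslates P S :=
  ⟨1, P.one_mem, J, hJ, by simp⟩

theorem cone_mem_omegaTranslates {p : G} (hp : p ∈ P) : cone P p ∈ omegaTranslates P S :=
  ⟨p, hp, ∅, by simp, by rw [image_mul_omegaJ]; simp⟩

theorem Set.IsFiniteDisjointUnion.image_mul {p : G} (hp : p ∈ P) {A : Set G}
    (hA : (omegaTranslates P S).IsFiniteDisjointUnion A) :
    (omegaTranslates P S).IsFiniteDisjointUnion ((p * ·) '' A) := by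
  refine hA.image (mul_right_injective p) ?_
  rintro _ ⟨q, hq, J, hJ, rfl⟩
  refine ⟨p * q, P.mul_mem hp hq, J, hJ, ?_⟩
  simp only [image_image, mul_assoc]

theorem exists_omegaJ_inter_cone (hjoin : GeneratorJoinCondition P S) {s : G} (hs : s ∈ P)
    {F : Finset G} (hF : ↑F ⊆ S) (hmin : ∀ q ∈ F, ¬ QLe P q s) :
    ∃ F' ⊆ F, OmegaJ P F ∩ cone P s = (s * ·) '' OmegaJ P F' := by
  classical
  refine ⟨F.filter fun q => QLub P s q (s * q), Finset.filter_subset _ _, ?_⟩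
  ext x
  simp only [image_mul_omegaJ, mem_inter_iff, mem_omegaJ, mem_sdiff, mem_cone, mem_iUnion,
    Finset.mem_filter, not_exists, and_imp]
  constructor
  · rintro ⟨⟨-, hFx⟩, hsx⟩
    exact ⟨hsx, fun q hq hlub hsqx => hFx q hq (hlub.2.1.trans hsqx)⟩
  · rintro ⟨hsx, hF'x⟩
    refine ⟨⟨hsx.mem_of_mem hs, fun q hq hqx => ?_⟩, hsx⟩
    rcases hjoin s hs q (hF hq) ⟨x, hsx, hqx⟩ with hlub | hlub
    · exact hmin q hq hlub.2.1
    · exact hF'x q hq hlub (hlub.2.2 x hsx hqx)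

theorem omegaJ_sdiff_cone (hS : S ⊆ P) (hjoin : GeneratorJoinCondition P S) {a : G}
    (ha : a ∈ Submonoid.closure S) (F : Finset G) (hF : ↑F ⊆ S) :
    (omegaTranslates P S).IsFiniteDisjointUnion (OmegaJ P F \ cone P a) := by
  induction ha using Submonoid.closure_induction_left generalizing F with
  | one =>
    rw [cone_one, sdiff_eq_empty.2 (omegaJ_subset F)]
    exact .empty
  | mul_left s hs b hb ih =>
    classical
    have hsP : s ∈ P := hS hs
    have hsb : cone P (s * b) ⊆ cone P s :=
      cone_antitone (QLe.mul_right (Submonoid.closure_le.2 hS hb))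
    have hsplit : OmegaJ P F \ cone P (s * b) =
        OmegaJ P (insert s F) ∪ (OmegaJ P F ∩ cone P s) \ cone P (s * b) := by
      ext x
      have := @hsb x
      simp only [omegaJ_insert, mem_union, mem_sdiff, mem_inter_iff]
      tauto
    rw [hsplit]
    refine .union (.of_mem (omegaJ_mem_omegaTranslates ?_)) ?_ ?_
    · simpa [insert_subset_iff] using ⟨hs, hF⟩
    · by_cases hmin : ∃ q ∈ F, QLe P q s
      · obtain ⟨q, hq, hqs⟩ := hmin
        have hempty : OmegaJ P F ∩ cone P s = ∅ :=
          eq_empty_of_forall_notMem fun x hx => (mem_omegaJ.1 hx.1).2 q hq (hqs.trans hx.2)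
        rw [hempty, empty_sdiff]
        exact .empty
      · push Not at hmin
        obtain ⟨F', hF'F, heq⟩ := exists_omegaJ_inter_cone hjoin hsP hF hmin
        rw [heq, ← image_mul_cone, ← image_sdiff (mul_right_injective s)]
        exact (ih F' ((Finset.coe_subset.2 hF'F).trans hF)).image_mul hsP
    · rw [omegaJ_insert]
      exact disjoint_sdiff_left.mono_right (sdiff_subset.trans inter_subset_right)

theorem isFiniteDisjointUnion_coe : (omegaTranslates P S).IsFiniteDisjointUnion (P : Set G) := by
  rw [← cone_one]
  exact .of_mem (cone_mem_omegaTranslates P.one_mem)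

theorem sdiff_cone_eq_of_qLub {A : Set G} {p c u : G} (hA : A ⊆ cone P p) (hu : QLub P p c u) :
    A \ cone P c = A \ cone P u := by
  rw [← cone_inter_cone_of_qLub hu, sdiff_inter, sdiff_eq_empty.2 hA, empty_union]

theorem memBP_subset {Ω : Set G} (hΩ : MemBP P Ω) : Ω ⊆ P := by
  induction hΩ with
  | basic p hp => exact cone_subset hp
  | compl Ω _ _ => exact sdiff_subset
  | union Ω₁ Ω₂ _ _ ih₁ ih₂ => exact union_subset ih₁ ih₂
  | inter Ω₁ Ω₂ _ _ ih₁ _ => exact inter_subset_left.trans ih₁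

section

variable (hQL : QuasiLatticeOrdered P) (hS : S ⊆ P) (hgen : Submonoid.closure S = P)
  (hjoin : GeneratorJoinCondition P S)
include hQL hS hgen hjoin

theorem isFiniteDisjointUnion_sdiff_cone {T : Set G} (hT : T ∈ omegaTranslates P S) (c : G) :
    (omegaTranslates P S).IsFiniteDisjointUnion (T \ cone P c) := by
  obtain ⟨p, hp, F, hF, rfl⟩ := hT
  have hsub : (p * ·) '' OmegaJ P F ⊆ cone P p :=
    (image_mul_omegaJ p F).trans_subset sdiff_subset
  by_cases hbdd : ∃ u, QLe P p u ∧ QLe P c u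
  · obtain ⟨u, hu⟩ := hQL.lub p c hbdd
    have hpu : p⁻¹ * u ∈ Submonoid.closure S := hgen ▸ hu.1
    rw [sdiff_cone_eq_of_qLub hsub hu, ← mul_inv_cancel_left p u, ← image_mul_cone,
      ← image_sdiff (mul_right_injective p)]
    exact (omegaJ_sdiff_cone hS hjoin hpu F hF).image_mul hp
  · have hdisj : Disjoint ((p * ·) '' OmegaJ P F) (cone P c) :=
      (disjoint_iff_inter_eq_empty.2 (cone_inter_cone_of_not_bdd hbdd)).mono_left hsub
    rw [hdisj.sdiff_eq_left]
    exact .of_mem ⟨p, hp, F, hF, rfl⟩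

theorem Set.IsFiniteDisjointUnion.sdiff_cone {A : Set G}
    (hA : (omegaTranslates P S).IsFiniteDisjointUnion A) (c : G) :
    (omegaTranslates P S).IsFiniteDisjointUnion (A \ cone P c) :=
  hA.inter_of_forall_mem fun _ hT => isFiniteDisjointUnion_sdiff_cone hQL hS hgen hjoin hT c

theorem Set.IsFiniteDisjointUnion.sdiff_biUnion_cone {A : Set G}
    (hA : (omegaTranslates P S).IsFiniteDisjointUnion A) {ι : Type*} (F : Finset ι)
    (c : ι → G) :
    (omegaTranslates P S).IsFiniteDisjointUnion (A \ ⋃ i ∈ F, cone P (c i)) := by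
  classical
  induction F using Finset.induction_on with
  | empty => simpa using hA
  | insert i F _ ih =>
    rw [Finset.set_biUnion_insert, union_comm, ← sdiff_sdiff]
    exact ih.sdiff_cone hQL hS hgen hjoin (c i)

theorem isFiniteDisjointUnion_biUnion_cone {ι : Type*} (F : Finset ι) {c : ι → G}
    (hc : ∀ i ∈ F, c i ∈ P) :
    (omegaTranslates P S).IsFiniteDisjointUnion (⋃ i ∈ F, cone P (c i)) := by
  classical
  induction F using Finset.induction_on with
  | empty => simpa using IsFiniteDisjointUnion.empty
  | insert i F _ ih =>
    rw [Finset.set_biUnion_insert, ← union_sdiff_self]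
    refine .union (.of_mem (cone_mem_omegaTranslates (hc i (Finset.mem_insert_self i F))))
      ((ih fun j hj => hc j (Finset.mem_insert_of_mem hj)).sdiff_cone hQL hS hgen hjoin _)
      disjoint_sdiff_right

theorem isFiniteDisjointUnion_inter {T U : Set G} (hT : T ∈ omegaTranslates P S)
    (hU : U ∈ omegaTranslates P S) :
    (omegaTranslates P S).IsFiniteDisjointUnion (T ∩ U) := by
  obtain ⟨p, hp, F, -, rfl⟩ := hT
  obtain ⟨q, hq, K, -, rfl⟩ := hU
  have hsplit : (p * ·) '' OmegaJ P F ∩ (q * ·) '' OmegaJ P K =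
      ((cone P p ∩ cone P q) \ ⋃ s ∈ F, cone P (p * s)) \ ⋃ t ∈ K, cone P (q * t) := by
    ext x
    simp only [image_mul_omegaJ, mem_inter_iff, mem_sdiff]
    tauto
  rw [hsplit]
  by_cases hbdd : ∃ u, QLe P p u ∧ QLe P q u
  · obtain ⟨u, hu⟩ := hQL.lub p q hbdd
    rw [cone_inter_cone_of_qLub hu]
    have hcone : (omegaTranslates P S).IsFiniteDisjointUnion (cone P u) :=
      .of_mem (cone_mem_omegaTranslates (hu.1.mem_of_mem hp))
    exact ((hcone.sdiff_biUnion_cone hQL hS hgen hjoin F _).sdiff_biUnion_cone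
      hQL hS hgen hjoin K _)
  · rw [cone_inter_cone_of_not_bdd hbdd, empty_sdiff, empty_sdiff]
    exact .empty

theorem isFiniteDisjointUnion_coe_sdiff {T : Set G} (hT : T ∈ omegaTranslates P S) :
    (omegaTranslates P S).IsFiniteDisjointUnion (P \ T) := by
  obtain ⟨p, hp, F, hF, rfl⟩ := hT
  have hcones : ⋃ s ∈ F, cone P (p * s) ⊆ cone P p :=
    iUnion₂_subset fun s hs => cone_antitone (QLe.mul_right (hS (hF hs)))
  rw [image_mul_omegaJ, sdiff_sdiff_right, inter_eq_right.2 (hcones.trans (cone_subset hp))]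
  refine .union ?_ (isFiniteDisjointUnion_biUnion_cone hQL hS hgen hjoin F
    fun s hs => P.mul_mem hp (hS (hF hs))) (disjoint_sdiff_left.mono_right hcones)
  exact isFiniteDisjointUnion_coe.sdiff_cone hQL hS hgen hjoin p

theorem isFiniteDisjointUnion_of_memBP {Ω : Set G} (hΩ : MemBP P Ω) :
    (omegaTranslates P S).IsFiniteDisjointUnion Ω := by
  have hinter : ∀ T ∈ omegaTranslates P S, ∀ U ∈ omegaTranslates P S,
      (omegaTranslates P S).IsFiniteDisjointUnion (T ∩ U) :=
    fun _ hT _ hU => isFiniteDisjointUnion_inter hQL hS hgen hjoin hT hU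
  have hcompl : ∀ {A : Set G}, (omegaTranslates P S).IsFiniteDisjointUnion A →
      (omegaTranslates P S).IsFiniteDisjointUnion (P \ A) := fun hA =>
    isFiniteDisjointUnion_coe.sdiff hinter hA fun _ hT =>
      isFiniteDisjointUnion_coe_sdiff hQL hS hgen hjoin hT
  induction hΩ with
  | basic p hp => exact .of_mem (cone_mem_omegaTranslates hp)
  | compl Ω _ ih => exact hcompl ih
  | union Ω₁ Ω₂ _ h₂ ih₁ ih₂ =>
    rw [← union_sdiff_self, ← inter_eq_left.2 (memBP_subset h₂), inter_sdiff_assoc]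
    exact ih₁.union (ih₂.inter hinter (hcompl ih₁))
      (disjoint_sdiff_right.mono_right inter_subset_right)
  | inter Ω₁ Ω₂ _ _ ih₁ ih₂ => exact ih₁.inter hinter ih₂

end

end

/-- Suppose `S ⊆ P \ {e}` generates `P` and for every `p ∈ P` and `s ∈ S`, either
`p ∨ s = p`, or `p ∨ s = ps`, or `p` and `s` have no common upper bound (this holds for
right-angled Artin monoids with their standard generators).  Then every `Ω ∈ B_P` is a
finite disjoint union of sets of the form `pP` or `p · ⋂_{s ∈ J} (P \ sP)` with `p ∈ P`
and `J ⊆ S` finite nonempty. -/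
theorem stmt14 {G : Type*} [Group G] (P : Submonoid G) (hQL : QuasiLatticeOrdered P)
    (S : Set G) (hS : S ⊆ (P : Set G) \ {1})
    (hgen : Submonoid.closure S = P)
    (hprop : ∀ p ∈ P, ∀ s ∈ S, (∃ u, QLe P p u ∧ QLe P s u) →
      QLub P p s p ∨ QLub P p s (p * s)) :
    ∀ Ω : Set G, MemBP P Ω →
      ∃ (n : ℕ) (T : Fin n → Set G),
        (∀ i, (∃ p ∈ P, T i = {x | QLe P p x}) ∨
          (∃ p ∈ P, ∃ J : Finset G, J.Nonempty ∧ ↑J ⊆ S ∧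
            T i = (p * ·) '' OmegaJ P J)) ∧
        (∀ i j, i ≠ j → Disjoint (T i) (T j)) ∧
        Ω = ⋃ i, T i := by
  intro Ω hΩ
  obtain ⟨n, T, hT, hdisj, rfl⟩ :=
    (isFiniteDisjointUnion_of_memBP hQL (fun s hs => (hS hs).1) hgen hprop hΩ).exists_fin
  refine ⟨n, T, fun i => ?_, hdisj, rfl⟩
  obtain ⟨p, hp, J, hJ, hTi⟩ := hT i
  rcases J.eq_empty_or_nonempty with rfl | hJne
  · exact Or.inl ⟨p, hp, by rw [hTi, image_mul_omegaJ]; simp [cone]⟩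
  · exact Or.inr ⟨p, hp, J, hJne, hJ, hTi⟩
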